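/- With the notation of the graph projector expansion: for the graph map F(z) = (z, f(z)) with ‖Df(z)‖ ≤ 1, the tangent projection S(z) = DF(z)(DF(z)ᵗDF(z))⁻¹DF(z)ᵗ and the base projection T = [[I_d,0],[0,0]] satisfy c₁·‖Df(z)‖ ≤ ‖S(z) - T‖ ≤ c₂·(‖Df(z)‖ + ‖Df(z)‖²) for constants c₁, c₂ > 0 depending only on the dimension, provided ‖Df(z)‖ is small enough (say ‖Df(z)‖ ≤ δ₀ for an explicit δ₀). In particular ‖Df(z)‖ ≲ ‖S(z) - T‖ ≲ ‖Df(z)‖. -/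

import Mathlib

/-- L² operator norm of a matrix, viewed as a linear map between Euclidean spaces. -/
noncomputable def matOpNorm {α β : Type*} [Fintype α] [Fintype β] [DecidableEq α] [DecidableEq β]
    (M : Matrix α β ℝ) : ℝ :=
  ‖LinearMap.toContinuousLinearMap (Matrix.toEuclideanLin M)‖

section helpers
open Matrix
variable {α β γ : Type*} [Fintype α] [Fintype β] [Fintype γ]
  [DecidableEq α] [DecidableEq β] [DecidableEq γ]

noncomputable def matCLM (M : Matrix α β ℝ) : EuclideanSpace ℝ β →L[ℝ] EuclideanSpace ℝ α :=
  LinearMap.toContinuousLinearMap (Matrix.toEuclideanLin M)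

lemma matOpNorm_def (M : Matrix α β ℝ) : matOpNorm M = ‖matCLM M‖ := rfl

lemma matCLM_apply (M : Matrix α β ℝ) (x : EuclideanSpace ℝ β) :
    matCLM M x = (WithLp.equiv 2 (α → ℝ)).symm (M *ᵥ (WithLp.equiv 2 (β → ℝ)) x) := rfl

lemma matOpNorm_nonneg (M : Matrix α β ℝ) : 0 ≤ matOpNorm M := norm_nonneg _

lemma matCLM_mul (M : Matrix α β ℝ) (N : Matrix β γ ℝ) :
    matCLM (M * N) = (matCLM M).comp (matCLM N) := by
  ext x i
  simp [matCLM_apply, Matrix.mulVec_mulVec]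

lemma matOpNorm_mul_le (M : Matrix α β ℝ) (N : Matrix β γ ℝ) :
    matOpNorm (M * N) ≤ matOpNorm M * matOpNorm N := by
  rw [matOpNorm_def, matCLM_mul]
  exact ContinuousLinearMap.opNorm_comp_le _ _

lemma matOpNorm_one_le : matOpNorm (1 : Matrix α α ℝ) ≤ 1 := by
  rw [matOpNorm_def]
  refine ContinuousLinearMap.opNorm_le_bound _ zero_le_one fun x => ?_
  have : matCLM (1 : Matrix α α ℝ) x = x := by
    ext i; simp [matCLM_apply]
  rw [this, one_mul]

lemma matCLM_add (M N : Matrix α β ℝ) : matCLM (M + N) = matCLM M + matCLM N := by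
  ext x i; simp [matCLM_apply, Matrix.add_mulVec]

lemma matCLM_neg (M : Matrix α β ℝ) : matCLM (-M) = -matCLM M := by
  ext x i; simp [matCLM_apply, Matrix.neg_mulVec]

lemma matOpNorm_neg (M : Matrix α β ℝ) : matOpNorm (-M) = matOpNorm M := by
  rw [matOpNorm_def, matOpNorm_def, matCLM_neg, norm_neg]

lemma abs_coord_le_norm (x : EuclideanSpace ℝ α) (i : α) : |x i| ≤ ‖x‖ := by
  rw [EuclideanSpace.norm_eq]
  have h1 : |x i| = Real.sqrt (‖x i‖ ^ 2) := by
    rw [Real.sqrt_sq_eq_abs]; simp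
  rw [h1]
  apply Real.sqrt_le_sqrt
  exact Finset.single_le_sum (f := fun j => ‖x j‖ ^ 2)
    (fun j _ => sq_nonneg _) (Finset.mem_univ i)

lemma abs_entry_le_matOpNorm (M : Matrix α β ℝ) (i : α) (j : β) :
    |M i j| ≤ matOpNorm M := by
  have h0 : matCLM M (EuclideanSpace.single j (1 : ℝ)) =
      (WithLp.equiv 2 (α → ℝ)).symm (M *ᵥ Pi.single j 1) := by
    rw [matCLM_apply]
    congr 1
  have h1 : (matCLM M (EuclideanSpace.single j (1 : ℝ))) i = M i j := by
    rw [h0]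
    simp [WithLp.equiv_symm_apply, PiLp.toLp_apply]
  calc |M i j| = |(matCLM M (EuclideanSpace.single j (1 : ℝ))) i| := by rw [h1]
    _ ≤ ‖matCLM M (EuclideanSpace.single j (1 : ℝ))‖ := abs_coord_le_norm _ _
    _ ≤ ‖matCLM M‖ * ‖EuclideanSpace.single j (1 : ℝ)‖ := (matCLM M).le_opNorm _
    _ = matOpNorm M := by rw [EuclideanSpace.norm_single]; simp [matOpNorm_def]

lemma matOpNorm_stdBasisMatrix_le (i : α) (j : β) (c : ℝ) :
    matOpNorm (Matrix.single i j c) ≤ |c| := by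
  rw [matOpNorm_def]
  refine ContinuousLinearMap.opNorm_le_bound _ (abs_nonneg c) fun x => ?_
  have h : matCLM (Matrix.single i j c) x =
      EuclideanSpace.single i (c * x j) := by
    ext k
    simp [matCLM_apply, WithLp.equiv_symm_apply, PiLp.toLp_apply, Matrix.mulVec, dotProduct,
      Matrix.single, EuclideanSpace.single_apply, ite_and]
    by_cases hk : k = i
    · simp [hk, Finset.sum_ite_eq' Finset.univ j]
    · simp [hk]
      intro h1
      exact absurd h1.symm hk
  rw [h, EuclideanSpace.norm_single, norm_mul]
  rw [Real.norm_eq_abs, Real.norm_eq_abs]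
  exact mul_le_mul_of_nonneg_left (abs_coord_le_norm x j) (abs_nonneg c)

lemma matOpNorm_le_sum_abs (M : Matrix α β ℝ) :
    matOpNorm M ≤ ∑ i, ∑ j, |M i j| := by
  conv_lhs => rw [Matrix.matrix_eq_sum_single M]
  calc matOpNorm (∑ i, ∑ j, Matrix.single i j (M i j))
      ≤ ∑ i, matOpNorm (∑ j, Matrix.single i j (M i j)) := by
        rw [matOpNorm_def]
        have : matCLM (∑ i, ∑ j, Matrix.single i j (M i j)) =
            ∑ i, matCLM (∑ j, Matrix.single i j (M i j)) := by
          simp only [matCLM]; rw [map_sum]; simp [map_sum]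
        rw [this]
        exact norm_sum_le _ _
    _ ≤ ∑ i, ∑ j, |M i j| := by
        refine Finset.sum_le_sum fun i _ => ?_
        calc matOpNorm (∑ j, Matrix.single i j (M i j))
            ≤ ∑ j, matOpNorm (Matrix.single i j (M i j)) := by
              rw [matOpNorm_def]
              have : matCLM (∑ j, Matrix.single i j (M i j)) =
                  ∑ j, matCLM (Matrix.single i j (M i j)) := by
                simp only [matCLM]; rw [map_sum]; simp [map_sum]
              rw [this]
              exact norm_sum_le _ _
          _ ≤ ∑ j, |M i j| := Finset.sum_le_sum fun j _ => matOpNorm_stdBasisMatrix_le i j _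

lemma matOpNorm_transpose_le (M : Matrix α β ℝ) :
    matOpNorm Mᵀ ≤ (Fintype.card α * Fintype.card β : ℝ) * matOpNorm M := by
  calc matOpNorm Mᵀ ≤ ∑ j, ∑ i, |Mᵀ j i| := matOpNorm_le_sum_abs _
    _ ≤ ∑ _j : β, ∑ _i : α, matOpNorm M := by
        refine Finset.sum_le_sum fun j _ => Finset.sum_le_sum fun i _ => ?_
        exact abs_entry_le_matOpNorm M i j
    _ = (Fintype.card β * Fintype.card α : ℝ) * matOpNorm M := by
        simp [Finset.sum_const, mul_assoc]
    _ = (Fintype.card α * Fintype.card β : ℝ) * matOpNorm M := by ring_nf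

end helpers

open Matrix in
lemma matOpNorm_add_le {α β : Type*} [Fintype α] [Fintype β] [DecidableEq α] [DecidableEq β]
    (M N : Matrix α β ℝ) : matOpNorm (M + N) ≤ matOpNorm M + matOpNorm N := by
  rw [matOpNorm_def, matOpNorm_def, matOpNorm_def, matCLM_add]
  exact norm_add_le _ _

/-- The differential `DF = [[I_d],[B]]` of the graph map `z ↦ (z, f(z))`, `B = Df`. -/
def graphDF {d m : ℕ} (B : Matrix (Fin m) (Fin d) ℝ) : Matrix (Fin d ⊕ Fin m) (Fin d) ℝ :=
  Matrix.of (Sum.elim (fun i => (1 : Matrix (Fin d) (Fin d) ℝ) i) (fun i => B i))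

/-- The orthogonal projection `S = DF (DFᵗDF)⁻¹ DFᵗ` onto the tangent plane of the graph. -/
noncomputable def graphProj {d m : ℕ} (B : Matrix (Fin m) (Fin d) ℝ) :
    Matrix (Fin d ⊕ Fin m) (Fin d ⊕ Fin m) ℝ :=
  graphDF B * ((graphDF B).transpose * graphDF B)⁻¹ * (graphDF B).transpose

open Matrix

lemma graphDF_eq {d m : ℕ} (B : Matrix (Fin m) (Fin d) ℝ) :
    graphDF B = Matrix.fromRows 1 B := rfl

lemma graphGram_eq {d m : ℕ} (B : Matrix (Fin m) (Fin d) ℝ) :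
    (graphDF B).transpose * graphDF B = 1 + Bᵀ * B := by
  rw [graphDF_eq, Matrix.transpose_fromRows, Matrix.transpose_one,
    Matrix.fromCols_mul_fromRows, Matrix.one_mul]

lemma graphProj_eq {d m : ℕ} (B : Matrix (Fin m) (Fin d) ℝ) :
    graphProj B = Matrix.fromBlocks ((1 + Bᵀ * B)⁻¹) ((1 + Bᵀ * B)⁻¹ * Bᵀ)
      (B * (1 + Bᵀ * B)⁻¹) (B * (1 + Bᵀ * B)⁻¹ * Bᵀ) := by
  rw [graphProj, graphGram_eq]
  conv_lhs => rw [graphDF_eq, Matrix.transpose_fromRows, Matrix.transpose_one]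
  rw [Matrix.fromRows_mul, Matrix.fromRows_mul_fromCols]
  simp [Matrix.one_mul, Matrix.mul_one]

set_option maxHeartbeats 2000000 in
theorem stmt_11 (d m : ℕ) :
    ∃ c₁ c₂ δ₀ : ℝ, 0 < c₁ ∧ 0 < c₂ ∧ 0 < δ₀ ∧ δ₀ ≤ 1 ∧
      ∀ B : Matrix (Fin m) (Fin d) ℝ, matOpNorm B ≤ δ₀ →
        c₁ * matOpNorm B ≤ matOpNorm (graphProj B -
          Matrix.fromBlocks (1 : Matrix (Fin d) (Fin d) ℝ) 0 0
            (0 : Matrix (Fin m) (Fin m) ℝ)) ∧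
        matOpNorm (graphProj B -
          Matrix.fromBlocks (1 : Matrix (Fin d) (Fin d) ℝ) 0 0
            (0 : Matrix (Fin m) (Fin m) ℝ)) ≤
          c₂ * (matOpNorm B + matOpNorm B ^ 2) := by
  classical
  set K : ℝ := (m : ℝ) * (d : ℝ) with hK
  have hK0 : 0 ≤ K := by positivity
  refine ⟨1 / (2 * K + 1),
    2 * K * ((d : ℝ) ^ 2 + (m : ℝ) ^ 2) + 2 * (d : ℝ) * (m : ℝ) * K + 2 * K + 1,
    1 / (2 * (K + 1)), by positivity, by positivity, by positivity, ?_, ?_⟩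
  · rw [div_le_one (by positivity)]; linarith
  intro B hB
  clear_value K
  set nB : ℝ := matOpNorm B with hnB
  have hnB0 : 0 ≤ nB := matOpNorm_nonneg B
  clear_value nB
  set G : Matrix (Fin d) (Fin d) ℝ := 1 + Bᵀ * B with hG
  -- transpose norm bound
  have hBt : matOpNorm Bᵀ ≤ K * nB := by
    have := matOpNorm_transpose_le B
    rw [hnB, hK]
    simpa [mul_comm] using this
  -- ‖BᵀB‖ ≤ 1/2
  have hBB : matOpNorm (Bᵀ * B) ≤ 1 / 2 := by
    have h1 := matOpNorm_mul_le Bᵀ B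
    rw [← hnB] at h1
    have h2 : matOpNorm Bᵀ * nB ≤ (K * nB) * nB :=
      mul_le_mul_of_nonneg_right hBt hnB0
    have h3 : nB ≤ 1 / (2 * (K + 1)) := hB
    have hsq : nB * nB ≤ (1 / (2 * (K + 1))) * (1 / (2 * (K + 1))) :=
      mul_le_mul hB hB hnB0 (by positivity)
    have h4 : K * nB * nB ≤ 1 / 2 := by
      have h5 : K * (nB * nB) ≤ K * ((1 / (2 * (K + 1))) * (1 / (2 * (K + 1)))) :=
        mul_le_mul_of_nonneg_left hsq hK0
      have h6 : K * ((1 / (2 * (K + 1))) * (1 / (2 * (K + 1)))) ≤ 1 / 2 := by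
        rw [div_mul_div_comm, one_mul, mul_one_div,
          div_le_div_iff₀ (by positivity) (by norm_num : (0:ℝ) < 2)]
        nlinarith [sq_nonneg K]
      nlinarith
    linarith
  -- invertibility of G
  have hpd : G.PosDef := by
    have hps : (Bᵀ * B).PosSemidef := by
      have := Matrix.posSemidef_conjTranspose_mul_self B
      rwa [Matrix.conjTranspose_eq_transpose_of_trivial] at this
    exact Matrix.PosDef.one.add_posSemidef hps
  have hdet : IsUnit G.det := (Matrix.isUnit_iff_isUnit_det G).mp hpd.isUnit
  have hGl : G⁻¹ * G = 1 := Matrix.nonsing_inv_mul G hdet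
  have hGr : G * G⁻¹ = 1 := Matrix.mul_nonsing_inv G hdet
  -- G⁻¹ = 1 - BᵀB * G⁻¹
  have hkey : G⁻¹ = 1 - Bᵀ * B * G⁻¹ := by
    have : (1 + Bᵀ * B) * G⁻¹ = 1 := by rw [← hG]; exact hGr
    rw [Matrix.add_mul, Matrix.one_mul] at this
    linear_combination (norm := module) this
  have hGinv : matOpNorm G⁻¹ ≤ 2 := by
    have h1 : matOpNorm G⁻¹ ≤ 1 + matOpNorm (Bᵀ * B * G⁻¹) := by
      calc matOpNorm G⁻¹ = matOpNorm (1 + -(Bᵀ * B * G⁻¹)) := by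
            rw [← sub_eq_add_neg, ← hkey]
        _ ≤ matOpNorm (1 : Matrix (Fin d) (Fin d) ℝ) + matOpNorm (-(Bᵀ * B * G⁻¹)) :=
            matOpNorm_add_le _ _
        _ ≤ 1 + matOpNorm (Bᵀ * B * G⁻¹) := by
            rw [matOpNorm_neg]; exact add_le_add matOpNorm_one_le le_rfl
    have h2 : matOpNorm (Bᵀ * B * G⁻¹) ≤ matOpNorm (Bᵀ * B) * matOpNorm G⁻¹ :=
      matOpNorm_mul_le _ _
    have h3 : matOpNorm (Bᵀ * B) * matOpNorm G⁻¹ ≤ (1/2) * matOpNorm G⁻¹ :=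
      mul_le_mul_of_nonneg_right hBB (matOpNorm_nonneg _)
    linarith
  have hGn : matOpNorm G ≤ 2 := by
    calc matOpNorm G ≤ matOpNorm (1 : Matrix (Fin d) (Fin d) ℝ) + matOpNorm (Bᵀ * B) :=
          matOpNorm_add_le _ _
      _ ≤ 1 + 1/2 := add_le_add matOpNorm_one_le hBB
      _ ≤ 2 := by norm_num
  set ST := graphProj B - Matrix.fromBlocks (1 : Matrix (Fin d) (Fin d) ℝ) 0 0
      (0 : Matrix (Fin m) (Fin m) ℝ) with hST
  have hSTn : 0 ≤ matOpNorm ST := matOpNorm_nonneg _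
  -- entries of ST
  have e11 : ∀ i j, ST (Sum.inl i) (Sum.inl j) = (G⁻¹ - 1) i j := by
    intro i j
    simp [hST, graphProj_eq, Matrix.sub_apply, ← hG]
  have e12 : ∀ i j, ST (Sum.inl i) (Sum.inr j) = (G⁻¹ * Bᵀ) i j := by
    intro i j
    simp [hST, graphProj_eq, Matrix.sub_apply, ← hG]
  have e21 : ∀ i j, ST (Sum.inr i) (Sum.inl j) = (B * G⁻¹) i j := by
    intro i j
    simp [hST, graphProj_eq, Matrix.sub_apply, ← hG]
  have e22 : ∀ i j, ST (Sum.inr i) (Sum.inr j) = (B * G⁻¹ * Bᵀ) i j := by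
    intro i j
    simp [hST, graphProj_eq, Matrix.sub_apply, ← hG]
  constructor
  · -- lower bound
    have hBG : matOpNorm (B * G⁻¹) ≤ K * matOpNorm ST := by
      calc matOpNorm (B * G⁻¹) ≤ ∑ i, ∑ j, |(B * G⁻¹) i j| := matOpNorm_le_sum_abs _
        _ ≤ ∑ _i : Fin m, ∑ _j : Fin d, matOpNorm ST := by
            refine Finset.sum_le_sum fun i _ => Finset.sum_le_sum fun j _ => ?_
            rw [← e21 i j]
            exact abs_entry_le_matOpNorm ST _ _
        _ = K * matOpNorm ST := by simp [hK, mul_assoc]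
    have hBle : nB ≤ 2 * (K * matOpNorm ST) := by
      have hBid : B = (B * G⁻¹) * G := by
        rw [Matrix.mul_assoc, hGl, Matrix.mul_one]
      have h1 : nB ≤ matOpNorm (B * G⁻¹) * matOpNorm G := by
        conv_lhs => rw [hnB, hBid]
        exact matOpNorm_mul_le _ _
      have h2 : matOpNorm (B * G⁻¹) * matOpNorm G ≤ matOpNorm (B * G⁻¹) * 2 :=
        mul_le_mul_of_nonneg_left hGn (matOpNorm_nonneg _)
      nlinarith [matOpNorm_nonneg (B * G⁻¹)]
    rw [div_mul_eq_mul_div, div_le_iff₀ (by positivity)]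
    nlinarith
  · -- upper bound
    have h11 : matOpNorm (G⁻¹ - 1) ≤ 2 * (K * nB) * nB := by
      have hid : G⁻¹ - 1 = -(Bᵀ * B * G⁻¹) := by
        linear_combination (norm := module) hkey
      rw [hid, matOpNorm_neg]
      have h1 := matOpNorm_mul_le (Bᵀ * B) G⁻¹
      have h2 := matOpNorm_mul_le Bᵀ B
      nlinarith [matOpNorm_nonneg (Bᵀ * B), matOpNorm_nonneg G⁻¹, matOpNorm_nonneg Bᵀ]
    have h12 : matOpNorm (G⁻¹ * Bᵀ) ≤ 2 * (K * nB) := by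
      have h1 := matOpNorm_mul_le G⁻¹ Bᵀ
      nlinarith [matOpNorm_nonneg Bᵀ, matOpNorm_nonneg G⁻¹]
    have h21 : matOpNorm (B * G⁻¹) ≤ 2 * nB := by
      have h1 := matOpNorm_mul_le B G⁻¹
      nlinarith [matOpNorm_nonneg B, matOpNorm_nonneg G⁻¹]
    have h22 : matOpNorm (B * G⁻¹ * Bᵀ) ≤ 2 * nB * (K * nB) := by
      have h1 := matOpNorm_mul_le (B * G⁻¹) Bᵀ
      nlinarith [matOpNorm_nonneg (B * G⁻¹), matOpNorm_nonneg Bᵀ]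
    have hsum : matOpNorm ST ≤
        (d : ℝ)^2 * (2 * (K * nB) * nB) + (d : ℝ) * (m : ℝ) * (2 * (K * nB))
        + (m : ℝ) * (d : ℝ) * (2 * nB) + (m : ℝ)^2 * (2 * nB * (K * nB)) := by
      calc matOpNorm ST ≤ ∑ s, ∑ t, |ST s t| := matOpNorm_le_sum_abs _
        _ = (∑ i : Fin d, ∑ j : Fin d, |ST (Sum.inl i) (Sum.inl j)|)
            + (∑ i : Fin d, ∑ j : Fin m, |ST (Sum.inl i) (Sum.inr j)|)
            + ((∑ i : Fin m, ∑ j : Fin d, |ST (Sum.inr i) (Sum.inl j)|)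
            + (∑ i : Fin m, ∑ j : Fin m, |ST (Sum.inr i) (Sum.inr j)|)) := by
            rw [Fintype.sum_sum_type]
            congr 1 <;>
            · rw [← Finset.sum_add_distrib]
              exact Finset.sum_congr rfl fun i _ => Fintype.sum_sum_type _
        _ ≤ (d : ℝ)^2 * (2 * (K * nB) * nB) + (d : ℝ) * (m : ℝ) * (2 * (K * nB))
            + ((m : ℝ) * (d : ℝ) * (2 * nB) + (m : ℝ)^2 * (2 * nB * (K * nB))) := by
            gcongr ?_ + ?_ + (?_ + ?_)
            · calc (∑ i : Fin d, ∑ j : Fin d, |ST (Sum.inl i) (Sum.inl j)|)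
                  ≤ ∑ _i : Fin d, ∑ _j : Fin d, (2 * (K * nB) * nB) := by
                    refine Finset.sum_le_sum fun i _ => Finset.sum_le_sum fun j _ => ?_
                    rw [e11 i j]
                    exact le_trans (abs_entry_le_matOpNorm _ _ _) h11
                _ = (d : ℝ)^2 * (2 * (K * nB) * nB) := by
                    simp [Finset.sum_const]; ring
            · calc (∑ i : Fin d, ∑ j : Fin m, |ST (Sum.inl i) (Sum.inr j)|)
                  ≤ ∑ _i : Fin d, ∑ _j : Fin m, (2 * (K * nB)) := by
                    refine Finset.sum_le_sum fun i _ => Finset.sum_le_sum fun j _ => ?_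
                    rw [e12 i j]
                    exact le_trans (abs_entry_le_matOpNorm _ _ _) h12
                _ = (d : ℝ) * (m : ℝ) * (2 * (K * nB)) := by
                    simp [Finset.sum_const]; ring
            · calc (∑ i : Fin m, ∑ j : Fin d, |ST (Sum.inr i) (Sum.inl j)|)
                  ≤ ∑ _i : Fin m, ∑ _j : Fin d, (2 * nB) := by
                    refine Finset.sum_le_sum fun i _ => Finset.sum_le_sum fun j _ => ?_
                    rw [e21 i j]
                    exact le_trans (abs_entry_le_matOpNorm _ _ _) h21
                _ = (m : ℝ) * (d : ℝ) * (2 * nB) := by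
                    simp [Finset.sum_const]; ring
            · calc (∑ i : Fin m, ∑ j : Fin m, |ST (Sum.inr i) (Sum.inr j)|)
                  ≤ ∑ _i : Fin m, ∑ _j : Fin m, (2 * nB * (K * nB)) := by
                    refine Finset.sum_le_sum fun i _ => Finset.sum_le_sum fun j _ => ?_
                    rw [e22 i j]
                    exact le_trans (abs_entry_le_matOpNorm _ _ _) h22
                _ = (m : ℝ)^2 * (2 * nB * (K * nB)) := by
                    simp [Finset.sum_const]; ring
        _ = _ := by ring
    clear hST e11 e12 e21 e22 hpd hdet hGl hGr hkey hGinv hGn hBt hBB hB hG hnB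
    clear_value ST
    clear h11 h12 h21 h22
    clear G B
    have hd0 : (0:ℝ) ≤ (d:ℝ) := Nat.cast_nonneg d
    have hm0 : (0:ℝ) ≤ (m:ℝ) := Nat.cast_nonneg m
    set c₂ : ℝ := 2 * K * ((d : ℝ) ^ 2 + (m : ℝ) ^ 2) + 2 * (d : ℝ) * (m : ℝ) * K + 2 * K + 1
      with hc₂
    have hco2 : 2 * K * (d : ℝ)^2 + (m : ℝ)^2 * (2 * K) ≤ c₂ := by
      rw [hc₂]
      nlinarith [mul_nonneg (mul_nonneg hd0 hm0) hK0]
    have hco1 : 2 * (d:ℝ) * (m:ℝ) * K + 2 * K ≤ c₂ := by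
      rw [hc₂]
      nlinarith [mul_nonneg hK0 (sq_nonneg (d:ℝ)), mul_nonneg hK0 (sq_nonneg (m:ℝ))]
    calc matOpNorm ST
        ≤ (d : ℝ)^2 * (2 * (K * nB) * nB) + (d : ℝ) * (m : ℝ) * (2 * (K * nB))
          + (m : ℝ) * (d : ℝ) * (2 * nB) + (m : ℝ)^2 * (2 * nB * (K * nB)) := hsum
      _ = (2 * K * (d : ℝ)^2 + (m : ℝ)^2 * (2 * K)) * nB^2
          + (2 * (d:ℝ) * (m:ℝ) * K + 2 * ((m:ℝ) * (d:ℝ))) * nB := by ring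
      _ = (2 * K * (d : ℝ)^2 + (m : ℝ)^2 * (2 * K)) * nB^2
          + (2 * (d:ℝ) * (m:ℝ) * K + 2 * K) * nB := by rw [hK]
      _ ≤ c₂ * nB^2 + c₂ * nB :=
          add_le_add (mul_le_mul_of_nonneg_right hco2 (sq_nonneg nB))
            (mul_le_mul_of_nonneg_right hco1 hnB0)
      _ = c₂ * (nB + nB^2) := by ring
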